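/- arXiv:2003.12157 — 5 statements merged into one kernel-verified Lean document; each statement's English description precedes it below -/
import Mathlib

section
/- Let E ⊆ ℝⁿ be an open convex set and h : E → ℝ a continuous function that is differentiable almost everywhere in E. If for a.e. x ∈ E and all y ∈ E one has h(y) - h(x) ≤ ∇h(x) · (y - x), then h is concave on E. -/
open MeasureTheory Filter Topology

theorem stmt_0 {n : ℕ} (E E₀ : Set (EuclideanSpace ℝ (Fin n)))
    (hEopen : IsOpen E) (hEconv : Convex ℝ E)
    (h : EuclideanSpace ℝ (Fin n) → ℝ)
    (hcont : ContinuousOn h E)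
    (hE₀ : E₀ ⊆ E) (hnull : volume (E \ E₀) = 0)
    (hdiff : ∀ x ∈ E₀, DifferentiableAt ℝ h x)
    (hineq : ∀ x ∈ E₀, ∀ y ∈ E, h y - h x ≤ (inner ℝ (gradient h x) (y - x) : ℝ)) :
    ConcaveOn ℝ E h := by
  refine ⟨hEconv, fun x hx y hy a b ha hb hab => ?_⟩
  set z := a • x + b • y with hzdef
  have hzE : z ∈ E := hEconv hx hy ha hb hab
  -- z is in the closure of E₀
  have hdense : z ∈ closure E₀ := by
    rw [mem_closure_iff]
    intro O hO hzO
    obtain ⟨ε, hε, hball⟩ := Metric.isOpen_iff.mp (hO.inter hEopen) z ⟨hzO, hzE⟩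
    have h1 : volume (Metric.ball z ε ∩ E₀) ≠ 0 := by
      intro h0
      have hle : volume (Metric.ball z ε) ≤ 0 := by
        calc volume (Metric.ball z ε)
            ≤ volume (Metric.ball z ε ∩ E₀) + volume (Metric.ball z ε \ E₀) :=
              measure_le_inter_add_diff _ _ _
          _ ≤ 0 + volume (E \ E₀) := by
              gcongr
              · exact le_of_eq h0
              · exact fun w hw => (hball hw).2
          _ = 0 := by rw [hnull, zero_add]
      exact (Metric.measure_ball_pos volume z hε).ne' (le_antisymm hle bot_le)
    obtain ⟨w, hw⟩ := nonempty_of_measure_ne_zero h1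
    obtain ⟨hwO, hwE⟩ := hball hw.1
    exact ⟨w, hwO, hw.2⟩
  obtain ⟨u, huE₀, hu⟩ := mem_closure_iff_seq_limit.mp hdense
  -- shifted sequences converging to x and y
  have hv : Tendsto (fun k => u k - z) atTop (𝓝 0) := by
    simpa using hu.sub (tendsto_const_nhds (x := z))
  have hxlim : Tendsto (fun k => x + (u k - z)) atTop (𝓝 x) := by
    simpa using tendsto_const_nhds.add hv
  have hylim : Tendsto (fun k => y + (u k - z)) atTop (𝓝 y) := by
    simpa using tendsto_const_nhds.add hv
  have hxE : ∀ᶠ k in atTop, x + (u k - z) ∈ E := hxlim.eventually (hEopen.eventually_mem hx)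
  have hyE : ∀ᶠ k in atTop, y + (u k - z) ∈ E := hylim.eventually (hEopen.eventually_mem hy)
  -- the key eventual inequality
  have key : ∀ᶠ k in atTop, a * h (x + (u k - z)) + b * h (y + (u k - z)) ≤ h (u k) := by
    filter_upwards [hxE, hyE] with k hxk hyk
    set g := gradient h (u k) with hg
    have e1 : x + (u k - z) - u k = x - z := by abel
    have e2 : y + (u k - z) - u k = y - z := by abel
    have h1 : h (x + (u k - z)) - h (u k) ≤ (inner ℝ g (x - z) : ℝ) := by
      have := hineq (u k) (huE₀ k) _ hxk
      rwa [e1] at this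
    have h2 : h (y + (u k - z)) - h (u k) ≤ (inner ℝ g (y - z) : ℝ) := by
      have := hineq (u k) (huE₀ k) _ hyk
      rwa [e2] at this
    have ha1 := mul_le_mul_of_nonneg_left h1 ha
    have hb1 := mul_le_mul_of_nonneg_left h2 hb
    have hsum := add_le_add ha1 hb1
    have hzero : a • (x - z) + b • (y - z) = 0 := by
      have : a • (x - z) + b • (y - z) = (a • x + b • y) - (a + b) • z := by module
      rw [this, hab, one_smul, ← hzdef, sub_self]
    have hinner : a * (inner ℝ g (x - z) : ℝ) + b * inner ℝ g (y - z) = 0 := by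
      rw [← real_inner_smul_right, ← real_inner_smul_right, ← inner_add_right, hzero,
        inner_zero_right]
    have hC : a * h (u k) + b * h (u k) = h (u k) := by rw [← add_mul, hab, one_mul]
    linarith [hsum, hinner, hC]
  -- pass to the limit
  have hlimL : Tendsto (fun k => a * h (x + (u k - z)) + b * h (y + (u k - z))) atTop
      (𝓝 (a * h x + b * h y)) := by
    have hcx : Tendsto (fun k => h (x + (u k - z))) atTop (𝓝 (h x)) :=
      ((hcont.continuousAt (hEopen.mem_nhds hx)).tendsto.comp hxlim)
    have hcy : Tendsto (fun k => h (y + (u k - z))) atTop (𝓝 (h y)) :=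
      ((hcont.continuousAt (hEopen.mem_nhds hy)).tendsto.comp hylim)
    exact ((tendsto_const_nhds.mul hcx).add (tendsto_const_nhds.mul hcy))
  have hlimR : Tendsto (fun k => h (u k)) atTop (𝓝 (h z)) :=
    (hcont.continuousAt (hEopen.mem_nhds hzE)).tendsto.comp hu
  have := le_of_tendsto_of_tendsto hlimL hlimR key
  simpa [smul_eq_mul] using this
end

section
/- Let E ⊆ ℝⁿ (n ≥ 2) be an open convex cone and ω, σ : E → (0,∞) differentiable weights, homogeneous of degrees τ and α, satisfying the balance condition with n_a > n. Set δ = −(1/q)·n_a/(n_a−n) and γ = (1/p)·n_a/(n_a−n), and suppose F(x) = ω(x)^δ σ(x)^γ is concave on E and ∇ω(x)·y ≥ 0 for all x, y ∈ E. Then condition C-0 holds with C₀ = n_a/(n_a−n): for all x, y ∈ E, F(y)/F(x) ≤ (n_a/(n_a−n)) ((1/p')∇ω(x)/ω(x) + (1/p)∇σ(x)/σ(x)) · y. -/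
set_option maxHeartbeats 1000000

open Real Filter Set Topology

theorem stmt_10 {n : ℕ} (hn : 2 ≤ n) (E : Set (EuclideanSpace ℝ (Fin n)))
    (hEopen : IsOpen E) (hEconv : Convex ℝ E)
    (hcone : ∀ l : ℝ, 0 < l → ∀ x ∈ E, l • x ∈ E)
    (ω σ : EuclideanSpace ℝ (Fin n) → ℝ) (p q τ α na : ℝ)
    (hp : 1 ≤ p) (hq : 0 < q)
    (hna : 1 / na = 1 / p - 1 / q) (hnan : (n : ℝ) < na)
    (hbal : (τ + n) / q = (α + n) / p - 1)
    (hωpos : ∀ x ∈ E, 0 < ω x) (hσpos : ∀ x ∈ E, 0 < σ x)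
    (hωdiff : ∀ x ∈ E, DifferentiableAt ℝ ω x)
    (hσdiff : ∀ x ∈ E, DifferentiableAt ℝ σ x)
    (hωhom : ∀ l : ℝ, 0 < l → ∀ x ∈ E, ω (l • x) = l ^ τ * ω x)
    (hσhom : ∀ l : ℝ, 0 < l → ∀ x ∈ E, σ (l • x) = l ^ α * σ x)
    (hF : ConcaveOn ℝ E
      (fun x => ω x ^ (-(1 / q) * (na / (na - n))) * σ x ^ ((1 / p) * (na / (na - n)))))
    (hgrad : ∀ x ∈ E, ∀ y ∈ E, 0 ≤ (inner ℝ (gradient ω x) y : ℝ)) :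
    ∀ x ∈ E, ∀ y ∈ E,
      (ω y ^ (-(1 / q) * (na / (na - n))) * σ y ^ ((1 / p) * (na / (na - n)))) /
          (ω x ^ (-(1 / q) * (na / (na - n))) * σ x ^ ((1 / p) * (na / (na - n)))) ≤
        (na / (na - n)) * (inner ℝ ((1 - 1 / p) • (ω x)⁻¹ • gradient ω x
            + (1 / p) • (σ x)⁻¹ • gradient σ x) y : ℝ) := by
  intro x hx y hy
  have hp0 : (0:ℝ) < p := lt_of_lt_of_le one_pos hp
  have hn0 : (0:ℝ) < (n:ℝ) := by
    have : (2:ℝ) ≤ (n:ℝ) := by exact_mod_cast hn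
    linarith
  have hna0 : (0:ℝ) < na := hn0.trans hnan
  have hnan0 : (0:ℝ) < na - (n:ℝ) := sub_pos.2 hnan
  set C : ℝ := na / (na - (n:ℝ)) with hCdef
  have hC0 : 0 < C := div_pos hna0 hnan0
  set δ : ℝ := -(1/q) * C with hδdef
  set γ : ℝ := (1/p) * C with hγdef
  set F : EuclideanSpace ℝ (Fin n) → ℝ := fun z => ω z ^ δ * σ z ^ γ with hFdef
  have hωx := hωpos x hx
  have hσx := hσpos x hx
  have hFx : 0 < F x := mul_pos (rpow_pos_of_pos hωx δ) (rpow_pos_of_pos hσx γ)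
  -- degree one
  have hq' : q ≠ 0 := ne_of_gt hq
  have hp' : p ≠ 0 := ne_of_gt hp0
  have hna' : na ≠ 0 := ne_of_gt hna0
  have hnan' : na - (n:ℝ) ≠ 0 := ne_of_gt hnan0
  have hkeydeg : α/p - τ/q = (na - (n:ℝ))/na := by
    have h2 : (α + n)/p = α/p + n/p := add_div _ _ _
    have h3 : (τ + n)/q = τ/q + n/q := add_div _ _ _
    have h4 : (n:ℝ)/p - n/q = n/na := by
      have : (n:ℝ)/p - n/q = n * (1/p - 1/q) := by ring
      rw [this, ← hna]; ring
    have h5 : ((na:ℝ) - n)/na = 1 - n/na := by field_simp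
    linarith
  have hdeg : τ * δ + α * γ = 1 := by
    have h6 : τ * δ + α * γ = (α/p - τ/q) * C := by rw [hδdef, hγdef]; ring
    rw [h6, hkeydeg, hCdef]
    field_simp
  -- homogeneity of F
  have hhomF : ∀ l : ℝ, 0 < l → ∀ z ∈ E, F (l • z) = l * F z := by
    intro l hl z hz
    have h1 : F (l • z) = (l ^ τ * ω z) ^ δ * (l ^ α * σ z) ^ γ := by
      simp only [hFdef, hωhom l hl z hz, hσhom l hl z hz]
    rw [h1, Real.mul_rpow (rpow_nonneg hl.le τ) (hωpos z hz).le,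
      Real.mul_rpow (rpow_nonneg hl.le α) (hσpos z hz).le,
      ← Real.rpow_mul hl.le, ← Real.rpow_mul hl.le]
    have h2 : l ^ (τ*δ) * l ^ (α*γ) = l := by
      rw [← Real.rpow_add hl, hdeg, Real.rpow_one]
    calc l ^ (τ*δ) * ω z ^ δ * (l ^ (α*γ) * σ z ^ γ)
        = l ^ (τ*δ) * l ^ (α*γ) * (ω z ^ δ * σ z ^ γ) := by ring
      _ = l * F z := by rw [h2]
  -- explicit derivative of F at x
  set Dω : EuclideanSpace ℝ (Fin n) →L[ℝ] ℝ := fderiv ℝ ω x with hDωdef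
  set Dσ : EuclideanSpace ℝ (Fin n) →L[ℝ] ℝ := fderiv ℝ σ x with hDσdef
  set L : EuclideanSpace ℝ (Fin n) →L[ℝ] ℝ :=
    (ω x ^ δ) • ((γ * σ x ^ (γ - 1)) • Dσ) + (σ x ^ γ) • ((δ * ω x ^ (δ - 1)) • Dω) with hLdef
  have hLx : HasFDerivAt F L x := by
    have h1 : HasFDerivAt (fun w => ω w ^ δ) ((δ * ω x ^ (δ - 1)) • Dω) x :=
      (hωdiff x hx).hasFDerivAt.rpow_const (Or.inl hωx.ne')
    have h2 : HasFDerivAt (fun w => σ w ^ γ) ((γ * σ x ^ (γ - 1)) • Dσ) x :=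
      (hσdiff x hx).hasFDerivAt.rpow_const (Or.inl hσx.ne')
    exact h1.mul h2
  -- Euler identity
  have hEuler : L x = F x := by
    have hsm : HasDerivAt (fun l : ℝ => l • x) x 1 := by
      simpa using (hasDerivAt_id (1:ℝ)).smul_const x
    have hg : HasDerivAt (fun l : ℝ => F (l • x)) (L x) 1 :=
      hLx.comp_hasDerivAt_of_eq 1 hsm (one_smul ℝ x).symm
    have heq : (fun l : ℝ => F (l • x)) =ᶠ[𝓝 (1:ℝ)] fun l => l * F x := by
      filter_upwards [eventually_gt_nhds one_pos] with l hl
      exact hhomF l hl x hx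
    have hg2 : HasDerivAt (fun l : ℝ => l * F x) (L x) 1 := hg.congr_of_eventuallyEq heq.symm
    have hg3 : HasDerivAt (fun l : ℝ => l * F x) (F x) 1 := by
      simpa using (hasDerivAt_id (1:ℝ)).mul_const (F x)
    exact hg2.unique hg3
  -- concavity gives F y ≤ L y
  have hkey : F y ≤ L y := by
    set v := y - x with hvdef
    have hray : ∀ t ∈ Set.Ioc (0:ℝ) 1, F y - F x ≤ (F (x + t • v) - F x) / t := by
      rintro t ⟨ht0, ht1⟩
      have hcomb : x + t • v = (1 - t) • x + t • y := by
        simp only [hvdef, smul_sub, sub_smul, one_smul]; abel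
      have hconc := hF.2 hx hy (by linarith : (0:ℝ) ≤ 1 - t) ht0.le (by ring)
      simp only [smul_eq_mul] at hconc
      rw [le_div_iff₀ ht0, hcomb]
      have hexp : (F y - F x) * t = (1 - t) * F x + t * F y - F x := by ring
      rw [hexp]
      linarith
    have hsm : HasDerivAt (fun t : ℝ => x + t • v) v 0 := by
      simpa using ((hasDerivAt_id (0:ℝ)).smul_const v).const_add x
    have hderiv : HasDerivAt (fun t : ℝ => F (x + t • v)) (L v) 0 :=
      hLx.comp_hasDerivAt_of_eq 0 hsm (by simp)
    have htend : Tendsto (slope (fun t : ℝ => F (x + t • v)) 0) (𝓝[>] (0:ℝ)) (𝓝 (L v)) :=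
      (hasDerivAt_iff_tendsto_slope.mp hderiv).mono_left
        (nhdsWithin_mono _ fun t ht => ne_of_gt ht)
    have hle : F y - F x ≤ L v := by
      refine ge_of_tendsto htend ?_
      filter_upwards [Ioc_mem_nhdsGT_of_mem ⟨le_refl (0:ℝ), one_pos⟩] with t ht
      have h10 := hray t ht
      rw [slope_def_field]
      simpa using h10
    have hLv : L v = L y - L x := by rw [hvdef, map_sub]
    rw [hLv, hEuler] at hle
    linarith
  -- pass to the goal
  have hinner : ∀ g : EuclideanSpace ℝ (Fin n) → ℝ, ∀ z,
      (inner ℝ (gradient g z) y : ℝ) = fderiv ℝ g z y := by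
    intro g z
    rw [← InnerProductSpace.toDual_apply_apply]
    simp only [gradient, LinearIsometryEquiv.apply_symm_apply]
  have hdiv : F y / F x ≤ L y / F x := (div_le_div_iff_of_pos_right hFx).mpr hkey
  show F y / F x ≤ C * _
  refine le_trans hdiv ?_
  have hLy : L y = ω x ^ δ * (γ * σ x ^ (γ - 1)) * Dσ y + σ x ^ γ * (δ * ω x ^ (δ - 1)) * Dω y := by
    simp only [hLdef, ContinuousLinearMap.add_apply, ContinuousLinearMap.coe_smul',
      Pi.smul_apply, smul_eq_mul]
    ring
  have hω1 : ω x ^ (δ - 1) = ω x ^ δ / ω x := Real.rpow_sub_one hωx.ne' δ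
  have hσ1 : σ x ^ (γ - 1) = σ x ^ γ / σ x := Real.rpow_sub_one hσx.ne' γ
  have hDω0 : 0 ≤ Dω y := by rw [hDωdef, ← hinner ω x]; exact hgrad x hx y hy
  have hRHS : (inner ℝ ((1 - 1 / p) • (ω x)⁻¹ • gradient ω x
            + (1 / p) • (σ x)⁻¹ • gradient σ x) y : ℝ)
      = (1 - 1/p) * ((ω x)⁻¹ * Dω y) + (1/p) * ((σ x)⁻¹ * Dσ y) := by
    rw [inner_add_left, real_inner_smul_left, real_inner_smul_left,
      real_inner_smul_left, real_inner_smul_left, hinner, hinner]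
  rw [hRHS]
  have hωδ : (0:ℝ) < ω x ^ δ := rpow_pos_of_pos hωx δ
  have hσγ : (0:ℝ) < σ x ^ γ := rpow_pos_of_pos hσx γ
  have hLyFx : L y / F x = δ * (Dω y / ω x) + γ * (Dσ y / σ x) := by
    rw [hLy, hω1, hσ1]
    simp only [hFdef]
    field_simp
    ring
  rw [hLyFx]
  have hcoef : 0 ≤ C * (1 - 1/p) - δ := by
    have h7 : C * (1 - 1/p) - δ = C * (1 - (1/p - 1/q)) := by rw [hδdef]; ring
    rw [h7, ← hna]
    have h8 : 1/na < 1 := by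
      rw [div_lt_one hna0]
      have h2n : (2:ℝ) ≤ (n:ℝ) := by exact_mod_cast hn
      linarith
    exact mul_nonneg hC0.le (by linarith)
  have hωinv : (0:ℝ) < (ω x)⁻¹ := inv_pos.2 hωx
  have hterm : δ * (Dω y / ω x) ≤ C * ((1 - 1/p) * ((ω x)⁻¹ * Dω y)) := by
    have h9 := mul_nonneg (mul_nonneg hcoef hDω0) hωinv.le
    rw [div_eq_mul_inv]
    nlinarith
  have hterm2 : γ * (Dσ y / σ x) = C * ((1/p) * ((σ x)⁻¹ * Dσ y)) := by
    rw [hγdef, div_eq_mul_inv]; ring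
  have hdistr : C * ((1 - 1/p) * ((ω x)⁻¹ * Dω y) + (1/p) * ((σ x)⁻¹ * Dσ y))
      = C * ((1 - 1/p) * ((ω x)⁻¹ * Dω y)) + C * ((1/p) * ((σ x)⁻¹ * Dσ y)) := by ring
  rw [hdistr]
  linarith
end

section
/- Let p ≥ 1, r > 0, β, γ ∈ ℝ, n ≥ 2 satisfy 1/r + γ/n > 0, 0 ≤ β − γ ≤ 1, and 1/r + γ/n = 1/p + (β−1)/n. Then for d > 1 sufficiently large, the parameters τ := n(d−1) + γrd, α := (n−p)(d−1) + βpd, q := r satisfy: (i) the balance condition (τ+n)/q = (α+n)/p − 1; (ii) 1 ≤ p < α+n ≤ τ+p+n; (iii) α ≥ (1 − p/n)τ; and (iv) τ/p' + α/p > 0. -/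
theorem stmt_14 (n : ℕ) (hn : 2 ≤ n) (p r β γ : ℝ)
    (hp : 1 ≤ p) (hr : 0 < r)
    (h1 : 0 < 1 / r + γ / n)
    (h2 : 0 ≤ β - γ) (h3 : β - γ ≤ 1)
    (h4 : 1 / r + γ / n = 1 / p + (β - 1) / n) :
    ∃ d₀ : ℝ, 1 < d₀ ∧ ∀ d : ℝ, d₀ ≤ d →
      ((n * (d - 1) + γ * r * d + n) / r = ((n - p) * (d - 1) + β * p * d + n) / p - 1) ∧
      (p < (n - p) * (d - 1) + β * p * d + n) ∧
      ((n - p) * (d - 1) + β * p * d + n ≤ n * (d - 1) + γ * r * d + p + n) ∧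
      ((1 - p / n) * (n * (d - 1) + γ * r * d) ≤ (n - p) * (d - 1) + β * p * d) ∧
      (0 < (n * (d - 1) + γ * r * d) * (1 - 1 / p) + ((n - p) * (d - 1) + β * p * d) / p) := by
  set N : ℝ := (n : ℝ) with hNdef
  have hN2 : (2:ℝ) ≤ N := by rw [hNdef]; exact_mod_cast hn
  have hN0 : (0:ℝ) < N := by linarith
  have hp0 : (0:ℝ) < p := by linarith
  set K : ℝ := 1/p + (β-1)/N with hKdef
  have hK : 0 < K := by rw [h4] at h1; exact h1
  -- γ r = N r K - N
  have hγr : γ * r = N * r * K - N := by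
    have h4' : (1/r + γ/N) * (r * N) = K * (r * N) := by rw [h4]
    field_simp at h4'
    linarith [h4']
  -- N - p + β p = p N K
  have hA : N - p + β * p = p * N * K := by
    rw [hKdef]; field_simp; ring
  -- 1/p - 1/r = (1 - β + γ)/N
  have hdiff : 1/p - 1/r = (1 - β + γ)/N := by linear_combination -h4
  -- p ≤ r
  have hrp : p ≤ r := by
    have h0 : (0:ℝ) ≤ (1 - β + γ)/N := by
      apply div_nonneg _ hN0.le; linarith
    have h1r : 1/r ≤ 1/p := by linarith
    have := (div_le_div_iff₀ hr hp0).mp h1r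
    linarith
  -- N (r - p) ≤ r p
  have key : N * r - N * p ≤ r * p := by
    have h5 : 1/p - 1/r ≤ 1/N := by
      rw [hdiff]
      gcongr
      · linarith
    have h5' : (r - p)/(p*r) ≤ 1/N := by
      have he : 1/p - 1/r = (r - p)/(p*r) := by field_simp
      linarith [he ▸ h5]
    have h6 := (div_le_div_iff₀ (by positivity) hN0).mp h5'
    nlinarith [h6]
  -- the coefficient for goal (v)
  set c : ℝ := N * K * (1 + r - r/p) with hcdef
  have hrpp : r/p ≤ r := div_le_self hr.le hp
  have hc : 0 < c := by
    have : (0:ℝ) < 1 + r - r/p := by linarith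
    rw [hcdef]; positivity
  refine ⟨max 2 ((N-1)/c + 1), lt_of_lt_of_le one_lt_two (le_max_left _ _), fun d hd => ?_⟩
  have hd2 : (2:ℝ) ≤ d := le_trans (le_max_left _ _) hd
  have hd0 : (0:ℝ) < d := by linarith
  have hcd : N - 1 < c * d := by
    have h7 : (N-1)/c + 1 ≤ d := le_trans (le_max_right _ _) hd
    have h8 : (N-1)/c < d := by linarith
    calc N - 1 = ((N-1)/c) * c := by field_simp
    _ < d * c := by apply mul_lt_mul_of_pos_right h8 hc
    _ = c * d := by ring
  have e1 : N * (d - 1) + γ * r * d = d * (N * r * K) - N := by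
    linear_combination d * hγr
  have e2 : (N - p) * (d - 1) + β * p * d = d * (p * N * K) + p - N := by
    linear_combination d * hA
  refine ⟨?_, ?_, ?_, ?_, ?_⟩
  · rw [e1, e2]
    field_simp
    ring
  · rw [e2]
    have : 0 < d * (p * N * K) := by positivity
    linarith
  · rw [e1, e2]
    have hint := mul_nonneg (mul_nonneg (mul_nonneg hd0.le hN0.le) hK.le)
      (sub_nonneg.mpr hrp)
    linarith [hint]
  · rw [e1, e2]
    have h9 : (1 - p/N) = (N - p)/N := by field_simp
    rw [h9, div_mul_eq_mul_div, div_le_iff₀ hN0]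
    have hint := mul_nonneg (mul_nonneg (mul_nonneg hd0.le hN0.le) hK.le)
      (by linarith : (0:ℝ) ≤ r*p + N*p - N*r)
    linarith [hint]
  · rw [e1, e2]
    have h10 : (d * (N * r * K) - N) * (1 - 1/p) + (d * (p * N * K) + p - N)/p
        = c * d - (N - 1) := by
      rw [hcdef]; field_simp; ring
    rw [h10]
    linarith
end

section
/- Let E = (0,∞)ⁿ with n ≥ 2, and define F(x) = ((x₁⋯xₙ)/(x₁+…+xₙ))^{1/(n−1)}. Then F is concave on E. -/
open Finset

/-- Tangent-line inequality: for positive `x, y`,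
`F x ≤ F y * (1/q) * ∑ x i * (1/y i - 1/∑ y)`, where `q = n - 1`. -/
lemma stmt_18_tangent (n : ℕ) (hn : 2 ≤ n) (x y : Fin n → ℝ)
    (hx : ∀ i, 0 < x i) (hy : ∀ i, 0 < y i) :
    ((∏ i, x i) / (∑ i, x i)) ^ (1 / ((n : ℝ) - 1)) ≤
      ((∏ i, y i) / (∑ i, y i)) ^ (1 / ((n : ℝ) - 1)) *
        ((1 / ((n : ℝ) - 1)) * ∑ i, x i * (1 / y i - 1 / ∑ j, y j)) := by
  have hn2 : (2 : ℝ) ≤ (n : ℝ) := by exact_mod_cast hn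
  set q : ℝ := (n : ℝ) - 1 with hqdef
  have hq : 0 < q := by simp only [hqdef]; linarith
  have hsx : 0 < ∑ i, x i := Finset.sum_pos (fun i _ => hx i) ⟨⟨0, by omega⟩, mem_univ _⟩
  have hsy : 0 < ∑ i, y i := Finset.sum_pos (fun i _ => hy i) ⟨⟨0, by omega⟩, mem_univ _⟩
  have hPx : 0 < ∏ i, x i := Finset.prod_pos fun i _ => hx i
  have hPy : 0 < ∏ i, y i := Finset.prod_pos fun i _ => hy i
  set sx := ∑ i, x i
  set sy := ∑ i, y i
  set r : Fin n → ℝ := fun i => x i / y i with hrdef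
  have hr : ∀ i, 0 < r i := fun i => div_pos (hx i) (hy i)
  have hPr : ∏ i, r i = (∏ i, x i) / (∏ i, y i) := by
    rw [hrdef, Finset.prod_div_distrib]
  have hyne : ∀ i, y i ≠ 0 := fun i => (hy i).ne'
  have hsyne : sy ≠ 0 := hsy.ne'
  have hsxne : sx ≠ 0 := hsx.ne'
  have hqne : q ≠ 0 := hq.ne'
  set w : Fin n → ℝ := fun i => y i / sy with hwdef
  have hw0 : ∀ i, 0 < w i := fun i => div_pos (hy i) hsy
  have hw1 : ∀ i, w i ≤ 1 := by
    intro i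
    rw [hwdef, div_le_one hsy]
    exact Finset.single_le_sum (fun j _ => (hy j).le) (mem_univ i)
  have hwsum : ∑ i, w i = 1 := by
    rw [hwdef, ← Finset.sum_div, div_self hsy.ne']
  -- Step A: geometric mean of r with weights w is ≤ sx / sy
  have hA : ∏ i, r i ^ w i ≤ sx / sy := by
    have h := Real.geom_mean_le_arith_mean_weighted univ w r
      (fun i _ => (hw0 i).le) hwsum (fun i _ => (hr i).le)
    calc ∏ i, r i ^ w i ≤ ∑ i, w i * r i := h
      _ = sx / sy := by
          rw [Finset.sum_div]
          refine Finset.sum_congr rfl fun i _ => ?_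
          rw [hwdef, hrdef, div_mul_div_comm, mul_comm sy (y i),
            mul_div_mul_left _ _ (hyne i)]
  have hArpos : 0 < ∏ i, r i ^ w i := Finset.prod_pos fun i _ => Real.rpow_pos_of_pos (hr i) _
  -- Step B: AM-GM with weights (1 - w i)/q
  have hwq : ∑ i, (1 - w i) / q = 1 := by
    rw [← Finset.sum_div, Finset.sum_sub_distrib, hwsum]
    simp only [Finset.sum_const, card_univ, Fintype.card_fin, nsmul_eq_mul, mul_one]
    rw [hqdef]
    field_simp
    exact div_self (by linarith)
  have hB : ∏ i, r i ^ ((1 - w i) / q) ≤ ∑ i, ((1 - w i) / q) * r i :=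
    Real.geom_mean_le_arith_mean_weighted univ _ r
      (fun i _ => div_nonneg (by linarith [hw1 i]) hq.le) hwq (fun i _ => (hr i).le)
  -- Step C: compare geometric means
  have hprod1w : ∏ i, r i ^ (1 - w i) = (∏ i, r i) / ∏ i, r i ^ w i := by
    rw [← Finset.prod_div_distrib]
    refine Finset.prod_congr rfl fun i _ => ?_
    rw [Real.rpow_sub (hr i), Real.rpow_one]
  have hC : ((∏ i, r i) / (sx / sy)) ^ (1 / q) ≤ ∏ i, r i ^ ((1 - w i) / q) := by
    have h1 : ∏ i, r i ^ ((1 - w i) / q) = (∏ i, r i ^ (1 - w i)) ^ (1 / q) := by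
      rw [← Real.finset_prod_rpow _ _ (fun i _ => (Real.rpow_pos_of_pos (hr i) _).le)]
      refine Finset.prod_congr rfl fun i _ => ?_
      rw [← Real.rpow_mul (hr i).le, div_eq_mul_one_div]
    rw [h1]
    refine Real.rpow_le_rpow (div_nonneg (Finset.prod_pos fun i _ => hr i).le
      (div_nonneg hsx.le hsy.le)) ?_ (one_div_nonneg.mpr hq.le)
    rw [hprod1w]
    have hPrpos : 0 < ∏ i, r i := Finset.prod_pos fun i _ => hr i
    exact div_le_div_of_nonneg_left hPrpos.le hArpos hA
  -- Put everything together
  have hsplit : ((∏ i, x i) / sx) ^ (1 / q)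
      = ((∏ i, y i) / sy) ^ (1 / q) * ((∏ i, r i) / (sx / sy)) ^ (1 / q) := by
    rw [← Real.mul_rpow (div_nonneg hPy.le hsy.le)
      (div_nonneg (Finset.prod_pos fun i _ => hr i).le (div_nonneg hsx.le hsy.le))]
    congr 1
    rw [hPr]
    field_simp
  have hRHS : ∑ i, ((1 - w i) / q) * r i
      = (1 / q) * ∑ i, x i * (1 / y i - 1 / sy) := by
    rw [Finset.mul_sum]
    refine Finset.sum_congr rfl fun i _ => ?_
    have hterm : (1 - w i) * r i = x i * (1 / y i - 1 / sy) := by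
      rw [hwdef, hrdef, mul_sub, mul_one_div, mul_one_div, sub_mul, one_mul,
        div_mul_div_comm, mul_comm sy (y i), mul_div_mul_left _ _ (hyne i)]
    rw [← hterm]
    ring
  calc ((∏ i, x i) / sx) ^ (1 / q)
      = ((∏ i, y i) / sy) ^ (1 / q) * ((∏ i, r i) / (sx / sy)) ^ (1 / q) := hsplit
    _ ≤ ((∏ i, y i) / sy) ^ (1 / q) * ∏ i, r i ^ ((1 - w i) / q) := by
        exact mul_le_mul_of_nonneg_left hC (Real.rpow_nonneg (div_nonneg hPy.le hsy.le) _)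
    _ ≤ ((∏ i, y i) / sy) ^ (1 / q) * ∑ i, ((1 - w i) / q) * r i := by
        exact mul_le_mul_of_nonneg_left hB (Real.rpow_nonneg (div_nonneg hPy.le hsy.le) _)
    _ = ((∏ i, y i) / sy) ^ (1 / q) * ((1 / q) * ∑ i, x i * (1 / y i - 1 / sy)) := by
        rw [hRHS]

theorem stmt_18 (n : ℕ) (hn : 2 ≤ n) :
    ConcaveOn ℝ {x : Fin n → ℝ | ∀ i, 0 < x i}
      (fun x => ((∏ i, x i) / (∑ i, x i)) ^ (1 / ((n : ℝ) - 1))) := by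
  have hn2 : (2 : ℝ) ≤ (n : ℝ) := by exact_mod_cast hn
  have hq : 0 < (n : ℝ) - 1 := by linarith
  constructor
  · -- convexity of the positive orthant
    intro x hx y hy a b ha hb hab i
    simp only [Pi.add_apply, Pi.smul_apply, smul_eq_mul]
    rcases ha.lt_or_eq with ha' | ha'
    · exact add_pos_of_pos_of_nonneg (mul_pos ha' (hx i)) (mul_nonneg hb (hy i).le)
    · have hb1 : b = 1 := by linarith
      simp [← ha', hb1]
      exact hy i
  · intro x hx y hy a b ha hb hab
    simp only [Set.mem_setOf_eq] at hx hy
    rcases ha.lt_or_eq with ha' | ha'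
    swap
    · have hb1 : b = 1 := by linarith
      simp [← ha', hb1]
    rcases hb.lt_or_eq with hb' | hb'
    swap
    · have ha1 : a = 1 := by linarith
      simp [← hb', ha1]
    set z : Fin n → ℝ := a • x + b • y with hzdef
    have hz : ∀ i, 0 < z i := by
      intro i
      simp only [hzdef, Pi.add_apply, Pi.smul_apply, smul_eq_mul]
      exact add_pos (mul_pos ha' (hx i)) (mul_pos hb' (hy i))
    have hsz : 0 < ∑ i, z i := Finset.sum_pos (fun i _ => hz i) ⟨⟨0, by omega⟩, mem_univ _⟩
    have hPz : 0 < ∏ i, z i := Finset.prod_pos fun i _ => hz i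
    have htx := stmt_18_tangent n hn x z hx hz
    have hty := stmt_18_tangent n hn y z hy hz
    set Fz := ((∏ i, z i) / (∑ i, z i)) ^ (1 / ((n : ℝ) - 1)) with hFzdef
    have hFz : 0 ≤ Fz := by positivity
    -- the tangent functional evaluated at z itself gives Fz
    have hself : ∑ i, z i * (1 / z i - 1 / ∑ j, z j) = (n : ℝ) - 1 := by
      have : ∀ i ∈ univ, z i * (1 / z i - 1 / ∑ j, z j) = 1 - z i / ∑ j, z j := by
        intro i _
        have h1 := (hz i).ne'
        have h2 := hsz.ne'
        field_simp
      rw [Finset.sum_congr rfl this, Finset.sum_sub_distrib, ← Finset.sum_div,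
        div_self hsz.ne']
      simp
    -- linearity of the tangent functional
    have hlin : a * ∑ i, x i * (1 / z i - 1 / ∑ j, z j)
        + b * ∑ i, y i * (1 / z i - 1 / ∑ j, z j)
        = ∑ i, z i * (1 / z i - 1 / ∑ j, z j) := by
      rw [Finset.mul_sum, Finset.mul_sum, ← Finset.sum_add_distrib]
      refine Finset.sum_congr rfl fun i _ => ?_
      simp only [hzdef, Pi.add_apply, Pi.smul_apply, smul_eq_mul]
      ring
    have key : a * (((∏ i, x i) / (∑ i, x i)) ^ (1 / ((n : ℝ) - 1)))
        + b * (((∏ i, y i) / (∑ i, y i)) ^ (1 / ((n : ℝ) - 1))) ≤ Fz := by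
      have h1 := mul_le_mul_of_nonneg_left htx ha
      have h2 := mul_le_mul_of_nonneg_left hty hb
      have h3 : a * (Fz * ((1 / ((n : ℝ) - 1)) * ∑ i, x i * (1 / z i - 1 / ∑ j, z j)))
          + b * (Fz * ((1 / ((n : ℝ) - 1)) * ∑ i, y i * (1 / z i - 1 / ∑ j, z j)))
          = Fz * ((1 / ((n : ℝ) - 1)) * ((n : ℝ) - 1)) := by
        rw [← hself, ← hlin]
        ring
      have h4 : Fz * ((1 / ((n : ℝ) - 1)) * ((n : ℝ) - 1)) = Fz := by
        rw [one_div_mul_cancel hq.ne', mul_one]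
      calc a * (((∏ i, x i) / (∑ i, x i)) ^ (1 / ((n : ℝ) - 1)))
            + b * (((∏ i, y i) / (∑ i, y i)) ^ (1 / ((n : ℝ) - 1)))
          ≤ a * (Fz * ((1 / ((n : ℝ) - 1)) * ∑ i, x i * (1 / z i - 1 / ∑ j, z j)))
            + b * (Fz * ((1 / ((n : ℝ) - 1)) * ∑ i, y i * (1 / z i - 1 / ∑ j, z j))) := by
            exact add_le_add h1 h2
        _ = Fz := by rw [h3, h4]
    simpa only [smul_eq_mul] using key
end

section
/- Let E ⊆ ℝⁿ be an open convex cone, ω : E → (0,∞) locally Lipschitz and positively homogeneous of degree 0, and suppose ∇ω(x) · y ≥ 0 for a.e. x ∈ E and all y ∈ E. Then ω is constant on E. -/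
open MeasureTheory Set Filter intervalIntegral
open scoped Topology ENNReal NNReal

set_option maxHeartbeats 1000000

lemma oneD_le {g : ℝ → ℝ} {K : ℝ} (hK : 0 ≤ K) {N : Set ℝ} (hN : volume N = 0)
    (hcont : ContinuousOn g (Icc 0 1))
    (hgood : ∀ t ∈ Ico (0:ℝ) 1, t ∉ N → HasDerivAt g 0 t)
    (hbad : ∀ t ∈ Ico (0:ℝ) 1, ∀ᶠ u in 𝓝[>] t, g u - g t ≤ K * (u - t)) :
    g 1 ≤ g 0 := by
  have main : ∀ ε : ℝ, 0 < ε → g 1 - g 0 ≤ ε + K * ε := by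
    intro ε εpos
    obtain ⟨U, hNU, hUopen, hUvol⟩ := Set.exists_isOpen_lt_of_lt N (ENNReal.ofReal ε)
      (by rw [hN]; exact ENNReal.ofReal_pos.2 εpos)
    set φ : ℝ → ℝ := U.indicator (fun _ => K) with hφdef
    have φnonneg : ∀ u, 0 ≤ φ u := fun u => Set.indicator_nonneg (fun _ _ => hK) u
    have φint : Integrable φ := by
      rw [hφdef, integrable_indicator_iff hUopen.measurableSet]
      exact integrableOn_const (hUvol.trans ENNReal.ofReal_lt_top).ne
    set S : Set ℝ := {t | g t - g 0 ≤ ε * t + ∫ u in (0:ℝ)..t, φ u} with hSdef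
    have s_closed : IsClosed (S ∩ Icc 0 1) := by
      have hc : ContinuousOn (fun t => (g t - g 0, ε * t + ∫ u in (0:ℝ)..t, φ u)) (Icc 0 1) := by
        apply (hcont.sub continuousOn_const).prodMk
        apply (continuousOn_const.mul continuousOn_id).add
        have := continuousOn_primitive_interval
          (f := φ) (μ := volume) (a := (0:ℝ)) (b := 1) (by
            rw [uIcc_of_le zero_le_one]; exact φint.integrableOn)
        rwa [uIcc_of_le zero_le_one] at this
      rw [inter_comm]
      exact hc.preimage_isClosed_of_isClosed isClosed_Icc OrderClosedTopology.isClosed_le'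
    have main2 : Icc (0:ℝ) 1 ⊆ S := by
      apply s_closed.Icc_subset_of_forall_exists_gt
      · simp [hSdef]
      · rintro t ⟨htS, ht0, ht1⟩ v htv
        have hsplit : ∀ u : ℝ, (∫ w in (0:ℝ)..u, φ w)
            = (∫ w in (0:ℝ)..t, φ w) + ∫ w in t..u, φ w :=
          fun u => (integral_add_adjacent_intervals φint.intervalIntegrable
            φint.intervalIntegrable).symm
        have I4 : ∀ᶠ u in 𝓝[>] t, u ∈ Ioc t (min v 1) := by
          refine mem_nhdsGT_iff_exists_Ioc_subset.2 ⟨min v 1, ?_, Subset.rfl⟩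
          simp only [lt_min_iff, mem_Ioi]
          exact ⟨htv, ht1⟩
        by_cases htN : t ∈ N
        · -- bad point: use the Lipschitz bound and the indicator integral
          obtain ⟨δ, δpos, hδU⟩ := Metric.isOpen_iff.1 hUopen t (hNU htN)
          have I1 : ∀ᶠ u in 𝓝[>] t, u ∈ Ioo t (t + δ) :=
            Ioo_mem_nhdsGT_of_mem ⟨le_rfl, by linarith⟩
          obtain ⟨u, hub, huI, huδ⟩ := ((hbad t ⟨ht0, ht1⟩).and (I4.and I1)).exists
          refine ⟨u, ?_, huI.1, huI.2.trans (min_le_left _ _)⟩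
          have hIccU : Icc t u ⊆ U := by
            intro w hw
            apply hδU
            simp only [Metric.mem_ball, Real.dist_eq, abs_lt]
            constructor <;> nlinarith [hw.1, hw.2, huδ.1, huδ.2]
          have hint : (∫ w in t..u, φ w) = K * (u - t) := by
            rw [integral_congr (g := fun _ => K) (by
              intro w hw
              rw [uIcc_of_le huδ.1.le] at hw
              exact Set.indicator_of_mem (hIccU hw) _)]
            simp [mul_comm]
          show g u - g 0 ≤ ε * u + ∫ w in (0:ℝ)..u, φ w
          have htS' : g t - g 0 ≤ ε * t + ∫ w in (0:ℝ)..t, φ w := htS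
          have h1 : g u - g 0 = (g t - g 0) + (g u - g t) := by ring
          rw [h1, hsplit u, hint]
          have : ε * t ≤ ε * u := by nlinarith [huδ.1]
          linarith [htS']
        · -- good point: derivative is 0
          have hd := hgood t ⟨ht0, ht1⟩ htN
          have I2 : ∀ᶠ u in 𝓝[>] t, g u - g t ≤ ε * (u - t) := by
            filter_upwards [(hd.hasDerivWithinAt (s := Ioi t)).limsup_slope_le'
              (notMem_Ioi.2 le_rfl) εpos, self_mem_nhdsWithin] with u hu htu
            rw [slope_def_field] at hu
            have h2 := (div_lt_iff₀ (sub_pos.2 (mem_Ioi.1 htu))).1 hu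
            nlinarith [h2]
          obtain ⟨u, hub, huI⟩ := (I2.and I4).exists
          refine ⟨u, ?_, huI.1, huI.2.trans (min_le_left _ _)⟩
          show g u - g 0 ≤ ε * u + ∫ w in (0:ℝ)..u, φ w
          have htS' : g t - g 0 ≤ ε * t + ∫ w in (0:ℝ)..t, φ w := htS
          have h1 : g u - g 0 = (g t - g 0) + (g u - g t) := by ring
          have hpos : 0 ≤ ∫ w in t..u, φ w :=
            intervalIntegral.integral_nonneg huI.1.le (fun w _ => φnonneg w)
          rw [h1, hsplit u]
          have : ε * t + ε * (u - t) = ε * u := by ring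
          linarith [htS']
    have h1S := main2 (right_mem_Icc.2 zero_le_one)
    have hφle : (∫ u in (0:ℝ)..1, φ u) ≤ K * ε := by
      rw [integral_of_le zero_le_one, hφdef,
        setIntegral_indicator hUopen.measurableSet]
      rw [setIntegral_const]
      have hvol : (volume (Ioc (0:ℝ) 1 ∩ U)).toReal ≤ ε :=
        ENNReal.toReal_le_of_le_ofReal εpos.le
          ((measure_mono inter_subset_right).trans hUvol.le)
      calc (volume (Ioc (0:ℝ) 1 ∩ U)).toReal • K ≤ ε * K := by
            rw [smul_eq_mul]
            exact mul_le_mul_of_nonneg_right hvol hK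
        _ = K * ε := mul_comm _ _
    have := h1S
    simp only [hSdef, mem_setOf_eq, mul_one] at this
    linarith
  by_contra h
  push_neg at h
  have hKpos : (0:ℝ) < 1 + K := by linarith
  have := main ((g 1 - g 0) / (2 * (1 + K))) (div_pos (by linarith) (by linarith))
  have h2 : ((g 1 - g 0) / (2 * (1 + K))) + K * ((g 1 - g 0) / (2 * (1 + K)))
      = (g 1 - g 0) / 2 := by field_simp
  rw [h2] at this
  linarith

lemma oneD_eq {g : ℝ → ℝ} {K : ℝ} (hK : 0 ≤ K) {N : Set ℝ} (hN : volume N = 0)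
    (hcont : ContinuousOn g (Icc 0 1))
    (hgood : ∀ t ∈ Ico (0:ℝ) 1, t ∉ N → HasDerivAt g 0 t)
    (hbad : ∀ t ∈ Ico (0:ℝ) 1, ∀ᶠ u in 𝓝[>] t, |g u - g t| ≤ K * (u - t)) :
    g 1 = g 0 := by
  have h1 : g 1 ≤ g 0 := oneD_le hK hN hcont hgood
    (fun t ht => (hbad t ht).mono fun u hu => (abs_le.1 hu).2)
  have h2 : (-g) 1 ≤ (-g) 0 := by
    apply oneD_le hK hN hcont.neg
      (fun t ht htN => by simpa using (hgood t ht htN).neg)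
    intro t ht
    filter_upwards [hbad t ht] with u hu
    show -g u - -g t ≤ K * (u - t)
    have := (abs_le.1 hu).1
    linarith [abs_nonneg (g u - g t)]
  have h2' : -g 1 ≤ -g 0 := h2
  linarith


theorem stmt_19 {n : ℕ} (E E₀ : Set (EuclideanSpace ℝ (Fin n)))
    (hEopen : IsOpen E) (hEconv : Convex ℝ E)
    (hcone : ∀ l : ℝ, 0 < l → ∀ x ∈ E, l • x ∈ E)
    (ω : EuclideanSpace ℝ (Fin n) → ℝ)
    (hωpos : ∀ x ∈ E, 0 < ω x)
    (hlip : ∀ x ∈ E, ∃ s ∈ nhds x, ∃ K : NNReal, LipschitzOnWith K ω s)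
    (hhom : ∀ l : ℝ, 0 < l → ∀ x ∈ E, ω (l • x) = ω x)
    (hE₀ : E₀ ⊆ E) (hnull : volume (E \ E₀) = 0)
    (hdiff : ∀ x ∈ E₀, DifferentiableAt ℝ ω x)
    (hgrad : ∀ x ∈ E₀, ∀ y ∈ E, 0 ≤ (inner ℝ (gradient ω x) y : ℝ)) :
    ∀ x ∈ E, ∀ y ∈ E, ω x = ω y := by
  classical
  -- Step 1: the derivative vanishes on E₀
  have hfd : ∀ x ∈ E₀, fderiv ℝ ω x = 0 := by
    intro x hx
    have hxE := hE₀ hx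
    have hd := hdiff x hx
    have heuler : fderiv ℝ ω x x = 0 := by
      have hsmul : HasDerivAt (fun l : ℝ => l • x) x 1 := by
        simpa using (hasDerivAt_id (1:ℝ)).smul_const x
      have hfa : HasFDerivAt ω (fderiv ℝ ω x) ((fun l : ℝ => l • x) 1) := by
        simpa using hd.hasFDerivAt
      have h1 : HasDerivAt (fun l : ℝ => ω (l • x)) (fderiv ℝ ω x x) 1 := by
        exact hfa.comp_hasDerivAt 1 hsmul
      have hconst : (fun l : ℝ => ω (l • x)) =ᶠ[nhds (1:ℝ)] fun _ => ω x := by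
        filter_upwards [Ioi_mem_nhds (zero_lt_one)] with l hl
        exact hhom l hl x hxE
      have h0 : HasDerivAt (fun l : ℝ => ω (l • x)) 0 1 :=
        (hasDerivAt_const (1:ℝ) (ω x)).congr_of_eventuallyEq hconst
      exact h1.unique h0
    have hinner : ∀ y, (inner ℝ (gradient ω x) y : ℝ) = fderiv ℝ ω x y := fun y =>
      InnerProductSpace.toDual_symm_apply
    obtain ⟨ρ, ρpos, hball⟩ := Metric.isOpen_iff.1 hEopen x hxE
    have hz : ∀ z : EuclideanSpace ℝ (Fin n), ‖z‖ < ρ → 0 ≤ fderiv ℝ ω x z := by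
      intro z hzn
      have hxz : x + z ∈ E := hball (by
        simp only [Metric.mem_ball, dist_eq_norm]
        simpa [add_sub_cancel_left] using hzn)
      have h := hgrad x hx (x + z) hxz
      rw [hinner, map_add, heuler] at h
      linarith
    have hz0 : ∀ z : EuclideanSpace ℝ (Fin n), ‖z‖ < ρ → fderiv ℝ ω x z = 0 := by
      intro z hzn
      have h1 := hz z hzn
      have h2 := hz (-z) (by simpa using hzn)
      rw [map_neg] at h2
      linarith
    apply ContinuousLinearMap.ext
    intro w
    rcases eq_or_ne w 0 with rfl | hw
    · simp
    · have hwpos : (0:ℝ) < ‖w‖ := norm_pos_iff.2 hw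
      have hnorm : ‖(ρ / (2 * ‖w‖)) • w‖ < ρ := by
        rw [norm_smul, Real.norm_eq_abs, abs_of_pos (by positivity)]
        rw [div_mul_eq_mul_div, mul_comm]
        rw [div_lt_iff₀ (by positivity)]
        nlinarith
      have h := hz0 _ hnorm
      rw [_root_.map_smul, smul_eq_mul] at h
      have hc : ρ / (2 * ‖w‖) ≠ 0 := by positivity
      have hfw : fderiv ℝ ω x w = 0 := by
        rcases mul_eq_zero.1 h with h' | h'
        · exact absurd h' hc
        · exact h'
      simp [hfw]
  -- The bad set, made measurable
  set Nbad := toMeasurable volume (E \ E₀) with hNbaddef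
  have hNbadm : MeasurableSet Nbad := measurableSet_toMeasurable _ _
  have hNbad0 : volume Nbad = 0 := by
    rw [hNbaddef, measure_toMeasurable]; exact hnull
  have hNbadsub : E \ E₀ ⊆ Nbad := subset_toMeasurable _ _
  -- continuity of ω on E
  have hcontE : ∀ p ∈ E, ContinuousAt ω p := by
    intro p hp
    obtain ⟨s, hs, K, hK⟩ := hlip p hp
    exact (hK.continuousOn p (mem_of_mem_nhds hs)).continuousAt hs
  -- Step 2: along good segments, ω is constant
  have hseg : ∀ z v : EuclideanSpace ℝ (Fin n),
      (∀ t ∈ Icc (0:ℝ) 1, z + t • v ∈ E) →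
      (∀ᵐ t : ℝ, z + t • v ∉ Nbad) → ω (z + v) = ω z := by
    intro z v hzv hae
    have hlin : Continuous (fun t : ℝ => z + t • v) := by continuity
    set S : Set (EuclideanSpace ℝ (Fin n)) := (fun t : ℝ => z + t • v) '' Icc 0 1 with hSdef
    have hScomp : IsCompact S := isCompact_Icc.image hlin
    have hSE : S ⊆ E := by rintro p ⟨t, ht, rfl⟩; exact hzv t ht
    have hcov : ∀ p ∈ S, ∃ U : Set (EuclideanSpace ℝ (Fin n)),
        IsOpen U ∧ p ∈ U ∧ ∃ K : ℝ≥0, LipschitzOnWith K ω U := by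
      intro p hp
      obtain ⟨s, hs, K, hK⟩ := hlip p (hSE hp)
      exact ⟨interior s, isOpen_interior, mem_interior_iff_mem_nhds.2 hs, K,
        hK.mono interior_subset⟩
    choose! Ufun hUopen hUmem Kfun hKlip using hcov
    obtain ⟨F, hFS, hFcov⟩ := hScomp.elim_nhds_subcover Ufun
      (fun p hp => (hUopen p hp).mem_nhds (hUmem p hp))
    set K0 : ℝ := (F.sup Kfun : ℝ≥0) * ‖v‖ with hK0def
    have hK0nonneg : 0 ≤ K0 := mul_nonneg (NNReal.coe_nonneg _) (norm_nonneg _)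
    set g : ℝ → ℝ := fun t => ω (z + t • v) with hgdef
    have hbound : ∀ t ∈ Icc (0:ℝ) 1, ∀ᶠ u in nhds t, |g u - g t| ≤ K0 * |u - t| := by
      intro t ht
      have hpS : z + t • v ∈ S := ⟨t, ht, rfl⟩
      obtain ⟨i, hiF, hpi⟩ := Set.mem_iUnion₂.1 (hFcov hpS)
      have hev : ∀ᶠ u in nhds t, z + u • v ∈ Ufun i :=
        hlin.continuousAt.preimage_mem_nhds ((hUopen i (hFS i hiF)).mem_nhds hpi)
      filter_upwards [hev] with u hu
      have hd := (hKlip _ (hFS i hiF)).dist_le_mul _ hu _ hpi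
      have hdist : dist (z + u • v) (z + t • v) = |u - t| * ‖v‖ := by
        rw [dist_eq_norm]
        have : z + u • v - (z + t • v) = (u - t) • v := by module
        rw [this, norm_smul, Real.norm_eq_abs]
      calc |g u - g t| = dist (ω (z + u • v)) (ω (z + t • v)) := (Real.dist_eq _ _).symm
        _ ≤ (Kfun i : ℝ) * dist (z + u • v) (z + t • v) := hd
        _ ≤ K0 * |u - t| := by
            rw [hdist, hK0def]
            have hKle : (Kfun i : ℝ) ≤ ((F.sup Kfun : ℝ≥0) : ℝ) :=
              NNReal.coe_le_coe.2 (Finset.le_sup hiF)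
            have h1 : (0:ℝ) ≤ |u - t| * ‖v‖ :=
              mul_nonneg (abs_nonneg _) (norm_nonneg _)
            nlinarith [abs_nonneg (u - t), norm_nonneg v, (Kfun i).coe_nonneg]
    have hcontg : ContinuousOn g (Icc 0 1) := by
      intro t ht
      apply ContinuousAt.continuousWithinAt
      have h0 : Tendsto (fun u => g u - g t) (nhds t) (nhds 0) := by
        apply squeeze_zero_norm' (by simpa [Real.norm_eq_abs] using hbound t ht)
        have : Tendsto (fun u : ℝ => K0 * |u - t|) (nhds t) (nhds (K0 * |t - t|)) :=
          (continuous_const.mul ((continuous_id.sub continuous_const).abs)).tendsto t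
        simpa using this
      have h2 := h0.add_const (g t)
      exact (by simpa using h2 : Tendsto (fun x => g x) (𝓝 t) (𝓝 (g t)))
    have hgood : ∀ t ∈ Ico (0:ℝ) 1, t ∉ {t : ℝ | z + t • v ∈ Nbad} → HasDerivAt g 0 t := by
      intro t ht htN
      have hpE : z + t • v ∈ E := hzv t ⟨ht.1, ht.2.le⟩
      have hpE₀ : z + t • v ∈ E₀ := by
        by_contra h
        exact htN (hNbadsub ⟨hpE, h⟩)
      have hline : HasDerivAt (fun u : ℝ => z + u • v) v t := by
        simpa using ((hasDerivAt_id t).smul_const v).const_add z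
      have h := (hdiff _ hpE₀).hasFDerivAt.comp_hasDerivAt t hline
      have h' := h
      simp only [hfd _ hpE₀, ContinuousLinearMap.zero_apply] at h'
      exact h'
    have hbad : ∀ t ∈ Ico (0:ℝ) 1, ∀ᶠ u in 𝓝[>] t, |g u - g t| ≤ K0 * (u - t) := by
      intro t ht
      filter_upwards [(hbound t ⟨ht.1, ht.2.le⟩).filter_mono nhdsWithin_le_nhds,
        self_mem_nhdsWithin] with u hu htu
      rwa [abs_of_pos (sub_pos.2 (mem_Ioi.1 htu))] at hu
    have hNt : volume {t : ℝ | z + t • v ∈ Nbad} = 0 := by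
      rw [ae_iff] at hae
      simpa using hae
    have hgg := oneD_eq hK0nonneg hNt hcontg hgood hbad
    have h1 : ω (z + (1:ℝ) • v) = ω (z + (0:ℝ) • v) := hgg
    rw [one_smul, zero_smul, add_zero] at h1
    exact h1
  -- Step 3: Fubini and passing to the limit
  intro x hx y hy
  set v := y - x with hvdef
  have hsegE : ∀ t ∈ Icc (0:ℝ) 1, x + t • v ∈ E := by
    intro t ht
    have h := hEconv hx hy (a := 1 - t) (b := t) (by linarith [ht.2]) ht.1 (by ring)
    have heq : x + t • v = (1 - t) • x + t • y := by rw [hvdef]; module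
    rwa [heq]
  set S : Set (EuclideanSpace ℝ (Fin n)) := (fun t : ℝ => x + t • v) '' Icc 0 1 with hSdef
  have hScomp : IsCompact S := isCompact_Icc.image (by continuity)
  have hSE : S ⊆ E := by rintro p ⟨t, ht, rfl⟩; exact hsegE t ht
  obtain ⟨ρ, ρpos, hρ⟩ := hScomp.exists_thickening_subset_open hEopen hSE
  have hthick : ∀ w : EuclideanSpace ℝ (Fin n), ‖w‖ < ρ →
      ∀ t ∈ Icc (0:ℝ) 1, (x + w) + t • v ∈ E := by
    intro w hw t ht
    apply hρ
    rw [Metric.mem_thickening_iff]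
    refine ⟨x + t • v, ⟨t, ht, rfl⟩, ?_⟩
    rw [dist_eq_norm]
    have : x + w + t • v - (x + t • v) = w := by module
    rwa [this]
  have hprod : ∀ᵐ zw : EuclideanSpace ℝ (Fin n), ∀ᵐ t : ℝ, zw + t • v ∉ Nbad := by
    have hP : ∀ᵐ p : EuclideanSpace ℝ (Fin n) × ℝ
        ∂((volume : Measure (EuclideanSpace ℝ (Fin n))).prod volume),
        p.1 + p.2 • v ∉ Nbad := by
      rw [ae_iff]
      have hc : Continuous fun p : EuclideanSpace ℝ (Fin n) × ℝ => p.1 + p.2 • v := by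
        fun_prop
      have hA : MeasurableSet {p : EuclideanSpace ℝ (Fin n) × ℝ | p.1 + p.2 • v ∈ Nbad} :=
        hc.measurable hNbadm
      have heq : {p : EuclideanSpace ℝ (Fin n) × ℝ | ¬ p.1 + p.2 • v ∉ Nbad}
          = {p : EuclideanSpace ℝ (Fin n) × ℝ | p.1 + p.2 • v ∈ Nbad} := by
        ext p; simp
      rw [heq, Measure.prod_apply_symm hA]
      have hslice : ∀ t : ℝ, volume ((fun z : EuclideanSpace ℝ (Fin n) => (z, t)) ⁻¹'
          {p : EuclideanSpace ℝ (Fin n) × ℝ | p.1 + p.2 • v ∈ Nbad}) = 0 := by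
        intro t
        have heq2 : ((fun z : EuclideanSpace ℝ (Fin n) => (z, t)) ⁻¹'
            {p : EuclideanSpace ℝ (Fin n) × ℝ | p.1 + p.2 • v ∈ Nbad})
            = (fun z : EuclideanSpace ℝ (Fin n) => z + t • v) ⁻¹' Nbad := rfl
        rw [heq2, measure_preimage_add_right volume (t • v) Nbad]
        exact hNbad0
      simp only [hslice]
      simp
    exact MeasureTheory.Measure.ae_ae_of_ae_prod hP
  have hgoodball : ∀ r : ℝ, 0 < r → ∃ w : EuclideanSpace ℝ (Fin n), ‖w‖ < r ∧
      (∀ᵐ t : ℝ, (x + w) + t • v ∉ Nbad) := by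
    intro r hr
    by_contra h
    push_neg at h
    have hsub : Metric.ball x r ⊆ {z : EuclideanSpace ℝ (Fin n) |
        ¬ ∀ᵐ t : ℝ, z + t • v ∉ Nbad} := by
      intro z hz
      have hzn : ‖z - x‖ < r := by
        rw [← dist_eq_norm]; exact Metric.mem_ball.1 hz
      have hzw := h (z - x) hzn
      simpa using hzw
    rw [ae_iff] at hprod
    have hle : volume (Metric.ball x r) ≤ volume {z : EuclideanSpace ℝ (Fin n) |
        ¬ ∀ᵐ t : ℝ, z + t • v ∉ Nbad} := measure_mono hsub
    rw [hprod] at hle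
    have hball := Metric.measure_ball_pos volume x hr
    exact absurd (le_antisymm hle zero_le) (ne_of_gt hball)
  choose w hw1 hw2 using fun k : ℕ => hgoodball (min ρ (1 / ((k:ℝ) + 1)))
    (lt_min ρpos (by positivity))
  have hωeq : ∀ k, ω (x + w k + v) = ω (x + w k) := by
    intro k
    exact hseg (x + w k) v (hthick (w k) (lt_of_lt_of_le (hw1 k) (min_le_left _ _))) (hw2 k)
  have hwlim : Tendsto (fun k => x + w k) atTop (nhds x) := by
    rw [tendsto_iff_dist_tendsto_zero]
    apply squeeze_zero (fun k => dist_nonneg)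
      (g := fun k : ℕ => 1 / ((k:ℝ) + 1))
    · intro k
      have : dist (x + w k) x = ‖w k‖ := by
        rw [dist_eq_norm]
        congr 1
        module
      rw [this]
      exact (hw1 k).le.trans (min_le_right _ _)
    · exact tendsto_one_div_add_atTop_nhds_zero_nat
  have h1 : Tendsto (fun k => ω (x + w k)) atTop (nhds (ω x)) :=
    (hcontE x hx).tendsto.comp hwlim
  have hxy : x + v = y := by rw [hvdef]; module
  have hwlim2 : Tendsto (fun k => x + w k + v) atTop (nhds y) := by
    rw [← hxy]
    exact hwlim.add_const v
  have h2 : Tendsto (fun k => ω (x + w k + v)) atTop (nhds (ω y)) :=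
    (hcontE y hy).tendsto.comp hwlim2
  have h1' : Tendsto (fun k => ω (x + w k + v)) atTop (nhds (ω x)) :=
    h1.congr (fun k => (hωeq k).symm)
  exact tendsto_nhds_unique h1' h2
end
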